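/- arXiv:2207.08306 — 2 statements merged into one kernel-verified Lean document; each statement's English description precedes it below -/
import Mathlib

section
/- For any M, s > 0, any depth L and width vector p: every ReLU network in F_M(L,p,s) (at most s nonzero weights, all weights in [−M,M]) is equal, as a function on [0,1]^d, to a modified ReLU network in G₁(L,p,s(M+1)), i.e. F_M(L,p,s) ⊂ G₁(L,p,s(M+1)). -/
open MeasureTheory ProbabilityTheory Finset
open scoped BigOperators Classical Pointwise

noncomputable section

/-- The ReLU activation function. -/
def relu (x : ℝ) : ℝ := max 0 x

/-- The modifier function `α` from the paper. -/
def alphaFn (x : ℝ) : ℝ := if x < -1 then x + 1 else if x ≤ 1 then 0 else x - 1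

/-- The unit cube `[0,1]^d`. -/
def cube (d : ℕ) : Set (Fin d → ℝ) := Set.Icc 0 1

/-- Collections of weight matrices for a network with width function `p`. -/
abbrev NetWeights (p : ℕ → ℕ) : Type :=
  (i : ℕ) → Matrix (Fin (p (i + 1))) (Fin (p i)) ℝ

/-- Hidden layer computations of a feedforward ReLU network. -/
def hiddenLayers (p : ℕ → ℕ) (W : NetWeights p) (x : Fin (p 0) → ℝ) :
    (k : ℕ) → Fin (p k) → ℝ
  | 0 => x
  | k + 1 => fun j => relu ((W k).mulVec (hiddenLayers p W x k) j)

/-- An ordinary feedforward ReLU network of depth `L` (real-valued output;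
the output width `p (L+1)` is assumed to be `1`, and the output is read off
by summing the coordinates of the last layer). -/
def reluNet (L : ℕ) (p : ℕ → ℕ) (W : NetWeights p) (x : Fin (p 0) → ℝ) : ℝ :=
  ∑ j, (W L).mulVec (hiddenLayers p W x L) j

/-- Apply the modifier `α` entrywise to the hidden weight matrices. -/
def modifyWeights (L : ℕ) (p : ℕ → ℕ) (V : NetWeights p) : NetWeights p :=
  fun i => if i < L then (V i).map alphaFn else V i

/-- A modified ReLU network. -/
def modNet (L : ℕ) (p : ℕ → ℕ) (V : NetWeights p) (x : Fin (p 0) → ℝ) : ℝ :=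
  reluNet L p (modifyWeights L p V) x

/-- `l₁` norm of a matrix: sum of absolute values of all entries. -/
def matL1 {m k : ℕ} (W : Matrix (Fin m) (Fin k) ℝ) : ℝ := ∑ i, ∑ j, |W i j|

/-- Squared Frobenius norm of a matrix. -/
def matL2sq {m k : ℕ} (W : Matrix (Fin m) (Fin k) ℝ) : ℝ := ∑ i, ∑ j, (W i j) ^ 2

/-- Number of nonzero entries of a matrix. -/
def matNNZ {m k : ℕ} (W : Matrix (Fin m) (Fin k) ℝ) : ℕ :=
  (Finset.univ.filter fun ij : Fin m × Fin k => W ij.1 ij.2 ≠ 0).card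

def weightsL1 (L : ℕ) (p : ℕ → ℕ) (W : NetWeights p) : ℝ :=
  ∑ i ∈ Finset.range (L + 1), matL1 (W i)

def weightsL2sq (L : ℕ) (p : ℕ → ℕ) (W : NetWeights p) : ℝ :=
  ∑ i ∈ Finset.range (L + 1), matL2sq (W i)

def weightsNNZ (L : ℕ) (p : ℕ → ℕ) (W : NetWeights p) : ℕ :=
  ∑ i ∈ Finset.range (L + 1), matNNZ (W i)

def weightsBounded (L : ℕ) (p : ℕ → ℕ) (M : ℝ) (W : NetWeights p) : Prop :=
  ∀ i ≤ L, ∀ j k, |W i j k| ≤ M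

/-- `|p|_∞ = max {p_0, ..., p_L}`. -/
def pMax (L : ℕ) (p : ℕ → ℕ) : ℕ := (Finset.range (L + 1)).sup p

/-- The class `F_M(L,p,s)`: ReLU networks with at most `s` nonzero weights,
all contained in `[-M, M]`, viewed as functions on `[0,1]^d`. -/
def sparseReluClass (L : ℕ) (p : ℕ → ℕ) (M s : ℝ) : Set ((Fin (p 0) → ℝ) → ℝ) :=
  {f | ∃ W : NetWeights p, (∀ x ∈ cube (p 0), f x = reluNet L p W x) ∧
        (weightsNNZ L p W : ℝ) ≤ s ∧ weightsBounded L p M W}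

/-- The class `F̃(L,p,r)`: ReLU networks with total `l₁` weight norm at most `r`. -/
def l1ReluClass (L : ℕ) (p : ℕ → ℕ) (r : ℝ) : Set ((Fin (p 0) → ℝ) → ℝ) :=
  {f | ∃ W : NetWeights p, (∀ x ∈ cube (p 0), f x = reluNet L p W x) ∧ weightsL1 L p W ≤ r}

/-- The class `G₁(L,p,r)`: modified ReLU networks with total `l₁` weight norm at most `r`. -/
def modClassL1 (L : ℕ) (p : ℕ → ℕ) (r : ℝ) : Set ((Fin (p 0) → ℝ) → ℝ) :=
  {g | ∃ V : NetWeights p, (∀ x ∈ cube (p 0), g x = modNet L p V x) ∧ weightsL1 L p V ≤ r}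

/-- The class `G₂(L,p,r)`: modified ReLU networks with total squared `l₂` weight norm at most `r`. -/
def modClassL2 (L : ℕ) (p : ℕ → ℕ) (r : ℝ) : Set ((Fin (p 0) → ℝ) → ℝ) :=
  {g | ∃ V : NetWeights p, (∀ x ∈ cube (p 0), g x = modNet L p V x) ∧ weightsL2sq L p V ≤ r}

/-- Partial derivative in coordinate direction `i`. -/
def pderivAlong {d : ℕ} (i : Fin d) (f : (Fin d → ℝ) → ℝ) : (Fin d → ℝ) → ℝ :=
  fun x => fderiv ℝ f x (Pi.single i 1)

/-- Multi-index partial derivative `∂^γ`. -/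
def multiPderiv {d : ℕ} (γ : Fin d → ℕ) (f : (Fin d → ℝ) → ℝ) : (Fin d → ℝ) → ℝ :=
  (List.finRange d).foldr (fun i h => (pderivAlong i)^[γ i] h) f

/-- Degree `|γ|` of a multi-index. -/
def degree {d : ℕ} (γ : Fin d → ℕ) : ℕ := ∑ i, γ i

/-- `|x - y|_∞`. -/
def supDist {d : ℕ} (x y : Fin d → ℝ) : ℝ := ⨆ i, |x i - y i|

/-- The Hölder ball `C^β_d(F)`. -/
def holderBall (d : ℕ) (β F : ℝ) : Set ((Fin d → ℝ) → ℝ) :=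
  {g | ContDiff ℝ (⌊β⌋₊ : ℕ∞) g ∧
    ∃ b h : (Fin d → ℕ) → ℝ,
      (∀ γ : Fin d → ℕ, (degree γ : ℝ) < β → ∀ x ∈ cube d, |multiPderiv γ g x| ≤ b γ) ∧
      (∀ γ : Fin d → ℕ, degree γ = ⌊β⌋₊ → ∀ x ∈ cube d, ∀ y ∈ cube d, x ≠ y →
        |multiPderiv γ g x - multiPderiv γ g y| ≤ h γ * supDist x y ^ (β - (⌊β⌋₊ : ℝ))) ∧
      (∑ᶠ (γ : Fin d → ℕ) (_ : (degree γ : ℝ) < β), b γ) +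
        (∑ᶠ (γ : Fin d → ℕ) (_ : degree γ = ⌊β⌋₊), h γ) ≤ F}

/-- `isCoverOfSize δ F N` : there is a `δ`-cover (in sup distance on `[0,1]^d`)
of the function class `F` of cardinality `N`. -/
def isCoverOfSize {d : ℕ} (δ : ℝ) (F : Set ((Fin d → ℝ) → ℝ)) (N : ℕ) : Prop :=
  ∃ fs : Fin N → (Fin d → ℝ) → ℝ, ∀ f ∈ F, ∃ k, ∀ x ∈ cube d, |f x - fs k x| ≤ δ

/-- `⌈log₂ x⌉` as a natural number. -/
def ceilLog2 (x : ℝ) : ℕ := (⌈Real.logb 2 x⌉).toNat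

/-- The width vector `(d, w, ..., w, 1)` of a network of depth `L`. -/
def widthVec (d w L : ℕ) : ℕ → ℕ
  | 0 => d
  | i + 1 => if i + 1 ≤ L then w else 1

/-- The depth `L_n = 8 + (⌈log₂ n⌉ + 5)(1 + ⌈log₂ (d ∨ β)⌉)`. -/
def Ln (d : ℕ) (β : ℝ) (n : ℕ) : ℕ :=
  8 + (Nat.clog 2 n + 5) * (1 + ceilLog2 (max (d : ℝ) β))

/-- `N_n = ⌈n^{d/(2β+d)}⌉`. -/
def Nn (d : ℕ) (β : ℝ) (n : ℕ) : ℕ := ⌈(n : ℝ) ^ ((d : ℝ) / (2 * β + d))⌉₊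

/-- The hidden width `6(d + ⌈β⌉) N_n`. -/
def wn (d : ℕ) (β : ℝ) (n : ℕ) : ℕ := 6 * (d + ⌈β⌉₊) * Nn d β n

/-- The width vector `p_n = (d, 6(d+⌈β⌉)⌈n^{d/(2β+d)}⌉, ..., 6(d+⌈β⌉)⌈n^{d/(2β+d)}⌉, 1)`. -/
def pn (d : ℕ) (β : ℝ) (n : ℕ) : ℕ → ℕ := widthVec d (wn d β n) (Ln d β n)

end

/-!
The modifier `α` is onto, with right inverse `w ↦ w + sign w`. So a ReLU network with weights `W`
is the modified network whose hidden weights are `W` pushed away from `0` by `1`. Each entry then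
costs nothing in `ℓ₁` norm when it is zero and at most `M + 1` otherwise, which gives the bound
`s (M + 1)`.
-/

noncomputable def alphaInv (x : ℝ) : ℝ := if 0 < x then x + 1 else if x < 0 then x - 1 else 0

lemma alphaFn_alphaInv (w : ℝ) : alphaFn (alphaInv w) = w := by
  unfold alphaFn alphaInv
  rcases lt_trichotomy w 0 with h | h | h <;> split_ifs <;> linarith

lemma abs_alphaInv (w : ℝ) : |alphaInv w| = if w = 0 then 0 else |w| + 1 := by
  unfold alphaInv
  rcases lt_trichotomy w 0 with h | rfl | h
  · rw [if_neg h.not_gt, if_pos h, if_neg h.ne, abs_of_neg h, abs_of_neg (by linarith)]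
    ring
  · simp
  · rw [if_pos h, if_neg h.ne', abs_of_pos h, abs_of_pos (by linarith)]

lemma cast_matNNZ {m k : ℕ} (W : Matrix (Fin m) (Fin k) ℝ) :
    (matNNZ W : ℝ) = ∑ i, ∑ j, if W i j = 0 then (0 : ℝ) else 1 := by
  rw [matNNZ, Finset.card_filter, ← Fintype.sum_prod_type']
  push_cast
  exact Finset.sum_congr rfl fun ij _ => by split_ifs <;> simp_all

lemma matL1_le_mul_matNNZ {m k : ℕ} {A W : Matrix (Fin m) (Fin k) ℝ} {c : ℝ}
    (h : ∀ i j, |A i j| ≤ if W i j = 0 then 0 else c) : matL1 A ≤ c * matNNZ W := by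
  rw [cast_matNNZ, matL1, Finset.mul_sum]
  refine Finset.sum_le_sum fun i _ => ?_
  rw [Finset.mul_sum]
  refine Finset.sum_le_sum fun j _ => (h i j).trans_eq ?_
  split_ifs <;> simp

noncomputable def liftWeights (L : ℕ) (p : ℕ → ℕ) (W : NetWeights p) : NetWeights p :=
  fun i => if i < L then (W i).map alphaInv else W i

lemma modifyWeights_liftWeights (L : ℕ) (p : ℕ → ℕ) (W : NetWeights p) :
    modifyWeights L p (liftWeights L p W) = W := by
  funext i
  by_cases h : i < L
  · ext j k
    simp [modifyWeights, liftWeights, h, alphaFn_alphaInv]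
  · simp [modifyWeights, liftWeights, h]

lemma modNet_liftWeights (L : ℕ) (p : ℕ → ℕ) (W : NetWeights p) :
    modNet L p (liftWeights L p W) = reluNet L p W := by
  funext x
  rw [modNet, modifyWeights_liftWeights]

lemma abs_liftWeights_le {L : ℕ} {p : ℕ → ℕ} {M : ℝ} {W : NetWeights p}
    (hW : weightsBounded L p M W) {i : ℕ} (hi : i ≤ L) (j k) :
    |liftWeights L p W i j k| ≤ if W i j k = 0 then 0 else M + 1 := by
  have hb := hW i hi j k
  by_cases hiL : i < L
  · simp only [liftWeights, hiL, if_true, Matrix.map_apply, abs_alphaInv]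
    split_ifs <;> linarith
  · simp only [liftWeights, hiL, if_false]
    split_ifs with h0
    · simp [h0]
    · linarith

lemma weightsL1_liftWeights_le {L : ℕ} {p : ℕ → ℕ} {M : ℝ} {W : NetWeights p}
    (hW : weightsBounded L p M W) :
    weightsL1 L p (liftWeights L p W) ≤ (M + 1) * weightsNNZ L p W := by
  rw [weightsL1, weightsNNZ, Nat.cast_sum, Finset.mul_sum]
  exact Finset.sum_le_sum fun i hi =>
    matL1_le_mul_matNNZ (abs_liftWeights_le hW (Nat.lt_succ_iff.mp (Finset.mem_range.mp hi)))

theorem sparse_subset_modL1_general (L : ℕ) (p : ℕ → ℕ)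
    (M s : ℝ) (hM : 0 < M) :
    sparseReluClass L p M s ⊆ modClassL1 L p (s * (M + 1)) := by
  rintro f ⟨W, hfW, hNNZ, hW⟩
  refine ⟨liftWeights L p W, fun x hx => by rw [hfW x hx, modNet_liftWeights], ?_⟩
  calc weightsL1 L p (liftWeights L p W) ≤ (M + 1) * weightsNNZ L p W :=
        weightsL1_liftWeights_le hW
    _ ≤ (M + 1) * s := mul_le_mul_of_nonneg_left hNNZ (by linarith)
    _ = s * (M + 1) := mul_comm _ _

/-- `F_M(L,p,s) ⊆ G₁(L,p,s(M+1))`. -/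
theorem sparse_subset_modL1 (L : ℕ) (p : ℕ → ℕ) (hp : p (L + 1) = 1)
    (M s : ℝ) (hM : 0 < M) (hs : 0 < s) :
    sparseReluClass L p M s ⊆ modClassL1 L p (s * (M + 1)) :=
  sparse_subset_modL1_general L p M s hM
end

section
/- For any M, s > 0, any depth L and width vector p: every modified ReLU network in G₁(L,p,s(M+1)) is equal, as a function on [0,1]^d, to an ordinary ReLU network in F_{s(M+1)}(L,p, s(M+1)+|p|_∞), i.e. G₁(L,p,s(M+1)) ⊂ F_{s(M+1)}(L,p, s(M+1)+|p|_∞), where |p|_∞ = max{p₀,...,p_L}. -/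
open MeasureTheory ProbabilityTheory Finset
open scoped BigOperators Classical Pointwise

/-!
The modified network with weights `V` is the ordinary network with weights `α(V)` on the hidden
layers and `V_L` on the output layer. Since `α` vanishes on `[-1, 1]` and shrinks everything else,
every nonzero hidden weight of `α(V)` uses up at least `1` of the `ℓ¹` budget, and every weight is
bounded by the `ℓ¹` norm. The unmodified output layer has at most `p_L ≤ |p|_∞` nonzero weights.
-/

lemma abs_alphaFn_le (x : ℝ) : |alphaFn x| ≤ |x| := by
  unfold alphaFn
  split_ifs with h1 h2
  · rw [abs_of_nonpos (by linarith), abs_of_nonpos (by linarith)]; linarith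
  · simp
  · rw [abs_of_nonneg (by linarith), abs_of_nonneg (by linarith)]; linarith

lemma one_le_abs_of_alphaFn_ne_zero {x : ℝ} (h : alphaFn x ≠ 0) : 1 ≤ |x| := by
  by_contra! hx
  obtain ⟨hlo, hhi⟩ := abs_lt.mp hx
  exact h (by simp [alphaFn, not_lt.mpr hlo.le, hhi.le])

lemma matL1_nonneg {m k : ℕ} (W : Matrix (Fin m) (Fin k) ℝ) : 0 ≤ matL1 W := by
  unfold matL1
  positivity

lemma matL1_eq_sum_prod {m k : ℕ} (W : Matrix (Fin m) (Fin k) ℝ) :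
    matL1 W = ∑ ij : Fin m × Fin k, |W ij.1 ij.2| :=
  (Fintype.sum_prod_type fun ij : Fin m × Fin k => |W ij.1 ij.2|).symm

lemma abs_le_matL1 {m k : ℕ} (W : Matrix (Fin m) (Fin k) ℝ) (i : Fin m) (j : Fin k) :
    |W i j| ≤ matL1 W := by
  rw [matL1_eq_sum_prod]
  exact single_le_sum (f := fun ij : Fin m × Fin k => |W ij.1 ij.2|)
    (fun _ _ => abs_nonneg _) (mem_univ (i, j))

lemma matNNZ_le {m k : ℕ} (W : Matrix (Fin m) (Fin k) ℝ) : matNNZ W ≤ m * k :=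
  (card_filter_le _ _).trans_eq (by simp)

lemma matNNZ_map_alphaFn_le_matL1 {m k : ℕ} (V : Matrix (Fin m) (Fin k) ℝ) :
    (matNNZ (V.map alphaFn) : ℝ) ≤ matL1 V := by
  rw [matNNZ, natCast_card_filter, matL1_eq_sum_prod]
  refine sum_le_sum fun ij _ => ?_
  split_ifs with h
  · exact one_le_abs_of_alphaFn_ne_zero h
  · exact abs_nonneg _

section Network

variable {L : ℕ} {p : ℕ → ℕ}

lemma le_pMax {i : ℕ} (hi : i ≤ L) : p i ≤ pMax L p :=
  le_sup (mem_range.mpr (Nat.lt_succ_of_le hi))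

lemma matL1_le_weightsL1 (W : NetWeights p) {i : ℕ} (hi : i ≤ L) :
    matL1 (W i) ≤ weightsL1 L p W :=
  single_le_sum (fun j _ => matL1_nonneg (W j)) (mem_range.mpr (Nat.lt_succ_of_le hi))

lemma weightsNNZ_modifyWeights_le (V : NetWeights p) :
    (weightsNNZ L p (modifyWeights L p V) : ℝ) ≤ weightsL1 L p V + p (L + 1) * p L := by
  have hidden : ∑ i ∈ range L, (matNNZ (modifyWeights L p V i) : ℝ) ≤ weightsL1 L p V :=
    calc ∑ i ∈ range L, (matNNZ (modifyWeights L p V i) : ℝ)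
        ≤ ∑ i ∈ range L, matL1 (V i) := sum_le_sum fun i hi => by
          simpa only [modifyWeights, if_pos (mem_range.mp hi)]
            using matNNZ_map_alphaFn_le_matL1 (V i)
      _ ≤ weightsL1 L p V := sum_le_sum_of_subset_of_nonneg
          (range_subset_range.mpr L.le_succ) fun j _ _ => matL1_nonneg (V j)
  have output : (matNNZ (modifyWeights L p V L) : ℝ) ≤ p (L + 1) * p L := by
    exact_mod_cast matNNZ_le _
  rw [weightsNNZ, sum_range_succ, Nat.cast_add, Nat.cast_sum]
  exact add_le_add hidden output

lemma weightsBounded_modifyWeights (V : NetWeights p) :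
    weightsBounded L p (weightsL1 L p V) (modifyWeights L p V) := by
  intro i hi j k
  refine le_trans ?_ (matL1_le_weightsL1 V hi)
  unfold modifyWeights
  split_ifs
  · exact (abs_alphaFn_le _).trans (abs_le_matL1 _ _ _)
  · exact abs_le_matL1 _ _ _

lemma weightsBounded_mono {M M' : ℝ} {W : NetWeights p} (h : weightsBounded L p M W)
    (hM : M ≤ M') : weightsBounded L p M' W :=
  fun i hi j k => (h i hi j k).trans hM

end Network

theorem modL1_subset_sparse_general (L : ℕ) (p : ℕ → ℕ) (hp : p (L + 1) = 1)
    (M s : ℝ) :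
    modClassL1 L p (s * (M + 1))
      ⊆ sparseReluClass L p (s * (M + 1)) (s * (M + 1) + (pMax L p : ℝ)) := by
  rintro g ⟨V, hgV, hV⟩
  refine ⟨modifyWeights L p V, hgV, ?_, weightsBounded_mono (weightsBounded_modifyWeights V) hV⟩
  have hout : (p L : ℝ) ≤ pMax L p := by exact_mod_cast le_pMax le_rfl
  calc (weightsNNZ L p (modifyWeights L p V) : ℝ)
      ≤ weightsL1 L p V + p (L + 1) * p L := weightsNNZ_modifyWeights_le V
    _ ≤ s * (M + 1) + pMax L p := by rw [hp, Nat.cast_one, one_mul]; gcongr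

/-- `G₁(L,p,s(M+1)) ⊆ F_{s(M+1)}(L,p,s(M+1)+|p|_∞)`. -/
theorem modL1_subset_sparse (L : ℕ) (p : ℕ → ℕ) (hp : p (L + 1) = 1)
    (M s : ℝ) (hM : 0 < M) (hs : 0 < s) :
    modClassL1 L p (s * (M + 1))
      ⊆ sparseReluClass L p (s * (M + 1)) (s * (M + 1) + (pMax L p : ℝ)) :=
  modL1_subset_sparse_general L p hp M s
end
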